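/- Let k ≥ 1 and consider rooted trees in which each node v has a label r_v = (r_{v1}, r_{v2}, r_{v3}) ∈ ℤ₊³ counting its entering lines by type, and every line carries a type in {α, A, C}, subject to the constraint that either r_{v3} ≥ 2 or r_{v1} + r_{v2} ≥ 1 whenever the line exiting v has type C. Define the order k(θ) of a tree θ as the number of lines with type ≠ C. Then every such tree θ satisfies |V(θ)| ≤ 3k(θ) − 2 if the root line has type α or A, and |V(θ)| ≤ 3k(θ) − 1 if the root line has type C. -/

import Mathlib

/-- Component labels for the lines of a labelled tree: `α`, `A`, or `C`. -/
inductive LineType where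
  | α : LineType
  | A : LineType
  | C : LineType
deriving DecidableEq

/-- A rooted labelled tree: each node carries the type of its exiting line and
the list of subtrees whose root lines enter the node. -/
inductive LTree where
  | node : LineType → List LTree → LTree

namespace LTree

/-- The type of the root line of the tree. -/
def rootType : LTree → LineType
  | .node t _ => t

/-- Number of nodes of the tree. -/
def numNodes : LTree → ℕ
  | .node _ cs => 1 + (cs.attach.map fun c => numNodes c.val).sum
decreasing_by
  have := List.sizeOf_lt_of_mem c.property
  simp only [LTree.node.sizeOf_spec] at *
  omega


/-- The order of a tree: the number of lines with type different from `C`. -/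
def order : LTree → ℕ
  | .node t cs =>
      (if t = LineType.C then 0 else 1) + (cs.attach.map fun c => order c.val).sum
decreasing_by
  have := List.sizeOf_lt_of_mem c.property
  simp only [LTree.node.sizeOf_spec] at *
  omega


/-- The constraint on trees: for every node whose exiting line has type `C`,
either at least two entering lines have type `C`, or at least one entering
line has type `α` or `A`. -/
inductive Valid : LTree → Prop
  | node (t : LineType) (cs : List LTree)
      (hcs : ∀ c ∈ cs, Valid c)
      (hC : t = LineType.C →
        2 ≤ (cs.filter fun c => rootType c = LineType.C).length ∨
        1 ≤ (cs.filter fun c => rootType c ≠ LineType.C).length) :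
      Valid (.node t cs)

end LTree


lemma list_bound (cs : List LTree)
    (H : ∀ c ∈ cs, 1 ≤ c.order ∧
      c.numNodes + (if c.rootType = LineType.C then 1 else 2) ≤ 3 * c.order) :
    (cs.map LTree.numNodes).sum + cs.length +
      (cs.filter fun c => c.rootType ≠ LineType.C).length ≤ 3 * (cs.map LTree.order).sum ∧
    cs.length ≤ (cs.map LTree.order).sum := by
  induction cs with
  | nil => simp
  | cons c cs ih =>
    obtain ⟨h1, h2⟩ := H c (by simp)
    obtain ⟨ih1, ih2⟩ := ih (fun c hc => H c (by simp [hc]))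
    simp only [List.map_cons, List.sum_cons, List.length_cons, List.filter_cons,
      ne_eq, decide_not] at *
    by_cases hc : c.rootType = LineType.C <;> simp [hc] at h2 ⊢ <;> omega

lemma key (θ : LTree) (hθ : θ.Valid) :
    1 ≤ θ.order ∧
    θ.numNodes + (if θ.rootType = LineType.C then 1 else 2) ≤ 3 * θ.order := by
  induction hθ with
  | node t cs hcs hC ih =>
    obtain ⟨hb, hl⟩ := list_bound cs ih
    rw [LTree.numNodes, LTree.order, LTree.rootType, List.attach_map_val,
      List.attach_map_val]
    simp only [ne_eq, decide_not] at hb ⊢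
    by_cases ht : t = LineType.C
    · subst ht
      simp only [reduceIte] at hb hl ⊢
      rcases hC rfl with h2 | h2
      · have := List.length_filter_le (fun c => decide (LTree.rootType c = LineType.C)) cs
        omega
      · simp only [ne_eq, decide_not] at h2
        have := List.length_filter_le (fun c => !decide (LTree.rootType c = LineType.C)) cs
        omega
    · simp only [if_neg ht]
      omega

theorem stmt_13 (θ : LTree) (hθ : LTree.Valid θ) (hk : 1 ≤ θ.order) :
    (θ.rootType ≠ LineType.C → θ.numNodes ≤ 3 * θ.order - 2) ∧
    (θ.rootType = LineType.C → θ.numNodes ≤ 3 * θ.order - 1) := by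
  obtain ⟨h1, h2⟩ := key θ hθ
  constructor <;> intro h <;> simp [h] at h2 <;> omega
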